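/- arXiv:1803.02888 — 3 statements merged into one kernel-verified Lean document; each statement's English description precedes it below -/
import Mathlib

section
/- For every odd integer k ≥ 3 and every odd integer n ≥ k+2, there exists a connected simple graph on n vertices in which exactly one vertex has degree k-1 and all other n-1 vertices have degree k. -/
/-!
Write `k = 2m + 1` and `n = 2h + 1`, so `m < h`. On `ℤ/n` take the circulant graph with jumps
`±1, …, ±m`, which is connected and `2m`-regular, and add the perfect matching of the nonzero
residues pairing `i` with `i + h` for `1 ≤ i ≤ h`. Its edges have jump `±h`, so they are new, and
every vertex except `0` gains exactly one neighbour.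
-/

open SimpleGraph

namespace SimpleGraph

theorem ncard_neighborSet_sup_of_disjoint {V : Type*} [Finite V] {G H : SimpleGraph V}
    (hGH : Disjoint G H) (v : V) :
    ((G ⊔ H).neighborSet v).ncard = (G.neighborSet v).ncard + (H.neighborSet v).ncard := by
  rw [neighborSet_sup, Set.ncard_union_eq (disjoint_neighborSet.2 hGH v)]

section Circulant

variable {G : Type*} [AddGroup G]

theorem circulantGraph_mono {s t : Set G} (hst : s ⊆ t) : circulantGraph s ≤ circulantGraph t :=
  fun _ _ ⟨hne, hadj⟩ => ⟨hne, hadj.imp (@hst _) (@hst _)⟩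

theorem neighborSet_circulantGraph (s : Set G) (v : G) :
    (circulantGraph s).neighborSet v = (· + v) '' ((s ∪ -s) \ {0}) := by
  ext w
  rw [Set.image_add_right, Set.mem_preimage]
  simp only [mem_neighborSet, circulantGraph_adj, Set.mem_sdiff, Set.mem_union, Set.mem_neg,
    Set.mem_singleton_iff, sub_eq_add_neg, neg_add_rev, neg_neg, add_neg_eq_zero,
    ne_comm (a := v)]
  tauto

theorem ncard_neighborSet_circulantGraph (s : Set G) (v : G) :
    ((circulantGraph s).neighborSet v).ncard = ((s ∪ -s) \ {0}).ncard := by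
  rw [neighborSet_circulantGraph, Set.ncard_image_of_injective _ (add_left_injective v)]

theorem connected_circulantGraph_of_one_mem {n : ℕ} {s : Set (Fin (n + 1))} (hs : 1 ∈ s) :
    (circulantGraph s).Connected :=
  cycleGraph_eq_circulantGraph n ▸ cycleGraph_connected |>.mono
    (circulantGraph_mono (Set.singleton_subset_iff.2 hs))

end Circulant

end SimpleGraph

/-- The residues `±1, …, ±m` in `Fin n`. -/
def shortJumps (n m : ℕ) : Set (Fin n) :=
  Fin.val ⁻¹' ↑(Finset.Icc 1 m ∪ Finset.Icc (n - m) (n - 1))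

section ShortJumps

variable {n m : ℕ}

theorem mem_shortJumps {d : Fin n} :
    d ∈ shortJumps n m ↔ 1 ≤ d.val ∧ d.val ≤ m ∨ n - m ≤ d.val ∧ d.val ≤ n - 1 := by
  simp [shortJumps]

theorem neg_shortJumps [NeZero n] : -shortJumps n m = shortJumps n m := by
  ext d
  rw [Set.mem_neg, mem_shortJumps, mem_shortJumps, Fin.val_neg']
  have := d.isLt
  rcases Nat.eq_zero_or_pos d.val with hd | hd
  · simp [hd]
  · rw [Nat.mod_eq_of_lt (by omega)]
    omega

theorem zero_notMem_shortJumps [NeZero n] (hmn : m < n) : (0 : Fin n) ∉ shortJumps n m := by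
  rw [mem_shortJumps, Fin.val_zero]
  omega

theorem ncard_shortJumps (hmn : 2 * m < n) : (shortJumps n m).ncard = 2 * m := by
  have hdisj : Disjoint (Finset.Icc 1 m) (Finset.Icc (n - m) (n - 1)) := by
    rw [Finset.disjoint_left]
    intro a ha hb
    simp only [Finset.mem_Icc] at ha hb
    omega
  have hrange : (↑(Finset.Icc 1 m ∪ Finset.Icc (n - m) (n - 1)) : Set ℕ) ⊆ Set.range (Fin.val (n := n)) := by
    intro a ha
    simp only [Finset.coe_union, Finset.coe_Icc, Set.mem_union, Set.mem_Icc] at ha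
    rw [Fin.range_val, Set.mem_Iio]
    omega
  rw [shortJumps, Set.ncard_preimage_of_injective_subset_range Fin.val_injective hrange,
    Set.ncard_coe_finset, Finset.card_union_of_disjoint hdisj, Nat.card_Icc, Nat.card_Icc]
  omega

theorem one_mem_shortJumps (hm : 1 ≤ m) : (1 : Fin (n + 1)) ∈ shortJumps (n + 1) m := by
  rw [mem_shortJumps, Fin.val_one']
  rcases Nat.eq_zero_or_pos n with hn | hn
  · simp only [hn]
    omega
  · rw [Nat.mod_eq_of_lt (by omega)]
    omega

theorem ncard_neighborSet_circulantGraph_shortJumps [NeZero n] (hmn : 2 * m < n) (v : Fin n) :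
    ((circulantGraph (shortJumps n m)).neighborSet v).ncard = 2 * m := by
  rw [ncard_neighborSet_circulantGraph, neg_shortJumps, Set.union_self,
    Set.sdiff_singleton_eq_self (zero_notMem_shortJumps (by omega)), ncard_shortJumps hmn]

end ShortJumps

def shiftMatching (h : ℕ) : SimpleGraph (Fin (2 * h + 1)) :=
  fromRel fun x y => 0 < x.val ∧ y.val = x.val + h

section ShiftMatching

variable {h : ℕ}

theorem shiftMatching_adj {x y : Fin (2 * h + 1)} :
    (shiftMatching h).Adj x y ↔ 0 < x.val ∧ y.val = x.val + h ∨ 0 < y.val ∧ x.val = y.val + h := by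
  have := x.isLt
  rw [shiftMatching, fromRel_adj, and_iff_right_iff_imp]
  rintro (⟨hx, hxy⟩ | ⟨hx, hxy⟩) rfl <;> omega

theorem ncard_neighborSet_shiftMatching_zero : ((shiftMatching h).neighborSet 0).ncard = 0 := by
  convert Set.ncard_empty (Fin (2 * h + 1))
  ext y
  simp only [mem_neighborSet, shiftMatching_adj, Fin.val_zero, Set.mem_empty_iff_false, iff_false]
  omega

theorem ncard_neighborSet_shiftMatching {x : Fin (2 * h + 1)} (hx : x ≠ 0) :
    ((shiftMatching h).neighborSet x).ncard = 1 := by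
  have hpos : 0 < x.val := Fin.pos_of_ne_zero hx
  have := x.isLt
  rw [Set.ncard_eq_one]
  by_cases hxh : x.val ≤ h
  · refine ⟨⟨x.val + h, by omega⟩, ?_⟩
    ext y
    simp only [mem_neighborSet, shiftMatching_adj, Set.mem_singleton_iff, Fin.ext_iff]
    omega
  · refine ⟨⟨x.val - h, by omega⟩, ?_⟩
    ext y
    simp only [mem_neighborSet, shiftMatching_adj, Set.mem_singleton_iff, Fin.ext_iff]
    omega

theorem val_sub_of_val_eq_add {x y : Fin (2 * h + 1)} (hx : 0 < x.val) (hxy : y.val = x.val + h) :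
    (x - y).val = h + 1 ∧ (y - x).val = h := by
  have := y.isLt
  rw [Fin.val_sub, Fin.val_sub, hxy]
  constructor
  · rw [Nat.mod_eq_of_lt] <;> omega
  · rw [show 2 * h + 1 - x.val + (x.val + h) = h + (2 * h + 1) by omega, Nat.add_mod_right,
      Nat.mod_eq_of_lt (by omega)]

theorem disjoint_circulantGraph_shiftMatching {m : ℕ} (hmh : m < h) :
    Disjoint (circulantGraph (shortJumps (2 * h + 1) m)) (shiftMatching h) := by
  have key : ∀ x y : Fin (2 * h + 1), 0 < x.val → y.val = x.val + h →
      ¬(circulantGraph (shortJumps (2 * h + 1) m)).Adj x y := by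
    intro x y hx hxy hadj
    obtain ⟨hxy₁, hyx₁⟩ := val_sub_of_val_eq_add hx hxy
    rw [circulantGraph_adj, mem_shortJumps, mem_shortJumps, hxy₁, hyx₁] at hadj
    omega
  rw [disjoint_left]
  intro x y hadj hxy
  rcases shiftMatching_adj.1 hxy with ⟨hx, hxy⟩ | ⟨hy, hyx⟩
  exacts [key x y hx hxy hadj, key y x hy hyx hadj.symm]

end ShiftMatching

theorem connected_nearly_regular (k n : ℕ) (hk : Odd k) (hk3 : 3 ≤ k) (hn : Odd n)
    (hnk : k + 2 ≤ n) :
    ∃ G : SimpleGraph (Fin n), G.Connected ∧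
      ∃ v : Fin n, (G.neighborSet v).ncard = k - 1 ∧
        ∀ w : Fin n, w ≠ v → (G.neighborSet w).ncard = k := by
  obtain ⟨m, rfl⟩ := hk
  obtain ⟨h, rfl⟩ := hn
  have hdisj := disjoint_circulantGraph_shiftMatching (m := m) (h := h) (by omega)
  have hdeg := ncard_neighborSet_circulantGraph_shortJumps (n := 2 * h + 1) (m := m) (by omega)
  refine ⟨circulantGraph (shortJumps (2 * h + 1) m) ⊔ shiftMatching h,
    (connected_circulantGraph_of_one_mem (one_mem_shortJumps (by omega))).mono le_sup_left,
    0, ?_, fun w hw => ?_⟩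
  · rw [ncard_neighborSet_sup_of_disjoint hdisj, hdeg, ncard_neighborSet_shiftMatching_zero]
    omega
  · rw [ncard_neighborSet_sup_of_disjoint hdisj, hdeg, ncard_neighborSet_shiftMatching hw]
end

section
/- Let G be a graph on {1,...,n} and let r, k ≥ 1 with k ≥ r and r·k even. Then the (r,k)-edit number of G satisfies N_{r,k}(G) ≥ (3/2)·r·(k-r+1). -/
open SimpleGraph

def IsExtension (n r k : ℕ) (G : SimpleGraph (Fin n)) (H : SimpleGraph (Fin (n + r))) : Prop :=
  (∀ i : Fin n, (H.neighborSet (Fin.castAdd r i)).ncard = (G.neighborSet i).ncard) ∧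
  (∀ j : Fin r, (H.neighborSet (Fin.natAdd n j)).ncard = k)

def E1 (n r : ℕ) (H : SimpleGraph (Fin (n + r))) : Set (Sym2 (Fin (n + r))) :=
  {e | e ∈ H.edgeSet ∧ ∃ i : Fin n, Fin.castAdd r i ∈ e}

def oldEdges (n r : ℕ) (G : SimpleGraph (Fin n)) : Set (Sym2 (Fin (n + r))) :=
  Sym2.map (Fin.castAdd r) '' G.edgeSet

noncomputable def editCost (n r : ℕ) (G : SimpleGraph (Fin n)) (H : SimpleGraph (Fin (n + r))) : ℕ :=
  (oldEdges n r G \ E1 n r H).ncard + (E1 n r H \ oldEdges n r G).ncard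

noncomputable def editNumber (n r k : ℕ) (G : SimpleGraph (Fin n)) : ℕ∞ :=
  sInf ((fun H => (editCost n r G H : ℕ∞)) '' {H | IsExtension n r k G H})

/-!
Let `x` be the number of edges of `H` joining an old vertex to a new one. A new vertex has at most
`r - 1` new neighbours, hence at least `k - r + 1` old ones, so `x ≥ r (k - r + 1)`; each of these
edges is an added edge. An old vertex keeps its degree, so it loses at least as many of its
`G`-edges as it gains new neighbours; summing over the old vertices counts every deleted edge
twice, so at least `x / 2` edges are deleted. The cost is therefore at least `3x / 2`.
-/

open Finset

namespace SimpleGraph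

variable {V W : Type*} [Fintype V] [Fintype W]

theorem ncard_neighborSet_eq_degree (G : SimpleGraph V) [DecidableRel G.Adj] (v : V) :
    (G.neighborSet v).ncard = G.degree v := by
  rw [Set.ncard_eq_toFinset_card', ← card_neighborSet_eq_degree, Set.toFinset_card]

theorem degree_le_degree_add_degree_sdiff [DecidableEq V] (G K : SimpleGraph V)
    [DecidableRel G.Adj] [DecidableRel K.Adj] (v : V) :
    G.degree v ≤ K.degree v + (G \ K).degree v :=
  calc G.degree v ≤ (K ⊔ G \ K).degree v := degree_le_of_le le_sup_sdiff
    _ ≤ K.degree v + (G \ K).degree v := by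
      simp only [← card_neighborFinset_eq_degree, neighborFinset_sup]
      exact card_union_le _ _

variable [DecidableEq W] (H : SimpleGraph W) [DecidableRel H.Adj] {s : Finset W}

theorem degree_lt_between_add {v : W} (hv : v ∈ s) :
    H.degree v < (H.between s sᶜ).degree v + #s := by
  have hsub : H.neighborFinset v ⊆ (H.between s sᶜ).neighborFinset v ∪ s.erase v := by
    intro w hw
    refine mem_union.2 ((mem_union.1 (neighborFinset_subset_between_union hv hw)).imp_right ?_)
    exact fun hws => mem_erase.2 ⟨(H.ne_of_adj ((mem_neighborFinset _ _ _).1 hw)).symm, hws⟩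
  calc H.degree v ≤ (H.between s sᶜ).degree v + #(s.erase v) :=
        (card_le_card hsub).trans (card_union_le _ _)
    _ < (H.between s sᶜ).degree v + #s := by
      rw [card_erase_of_mem hv]
      have := card_pos.2 ⟨v, hv⟩
      omega

theorem degree_between_add_degree_comap_le (f : V ↪ W) (hf : ∀ i, f i ∉ s) (i : V) :
    (H.between s sᶜ).degree (f i) + (H.comap f).degree i ≤ H.degree (f i) := by
  have hdisj : Disjoint ((H.between s sᶜ).neighborFinset (f i))
      (((H.comap f).neighborFinset i).map f) := by
    rw [Finset.disjoint_left]
    intro w hw hw'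
    obtain ⟨j, -, rfl⟩ := mem_map.1 hw'
    have := ((mem_neighborFinset _ _ _).1 hw).2
    simp [hf] at this
  rw [← card_neighborFinset_eq_degree, ← card_neighborFinset_eq_degree (H.comap f),
    ← card_map f, ← card_union_of_disjoint hdisj, ← card_neighborFinset_eq_degree]
  refine card_le_card (union_subset ?_ ?_)
  · exact fun w hw => (mem_neighborFinset _ _ _).2 ((mem_neighborFinset _ _ _).1 hw).1
  · intro w hw
    obtain ⟨j, hj, rfl⟩ := mem_map.1 hw
    simpa using hj

end SimpleGraph

section Extension

variable {n r k : ℕ} {G : SimpleGraph (Fin n)} {H : SimpleGraph (Fin (n + r))}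

def newVertices (n r : ℕ) : Finset (Fin (n + r)) := univ.map (Fin.natAddEmb n)

lemma card_newVertices : #(newVertices n r) = r := by simp [newVertices]

lemma natAdd_mem_newVertices (j : Fin r) : Fin.natAdd n j ∈ newVertices n r :=
  mem_map_of_mem _ (mem_univ j)

lemma castAdd_notMem_newVertices (i : Fin n) : Fin.castAdd r i ∉ newVertices n r := by
  simp [newVertices, Fin.ext_iff]
  omega

lemma exists_castAdd_eq_of_notMem_newVertices {v : Fin (n + r)} (hv : v ∉ newVertices n r) :
    ∃ i, Fin.castAdd r i = v := by
  induction v using Fin.addCases with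
  | left i => exact ⟨i, rfl⟩
  | right j => exact absurd (natAdd_mem_newVertices j) hv

lemma compl_newVertices : (newVertices n r)ᶜ = univ.map (Fin.castAddEmb r) := by
  ext v
  simp only [mem_compl, mem_map, mem_univ, true_and, Fin.castAddEmb_apply]
  exact ⟨exists_castAdd_eq_of_notMem_newVertices,
    fun ⟨i, hi⟩ => hi ▸ castAdd_notMem_newVertices i⟩

abbrev crossGraph (H : SimpleGraph (Fin (n + r))) : SimpleGraph (Fin (n + r)) :=
  H.between (newVertices n r) (newVertices n r)ᶜ

lemma crossGraph_isBipartiteWith :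
    (crossGraph H).IsBipartiteWith ↑(newVertices n r) ↑(newVertices n r)ᶜ := by
  simpa using between_isBipartiteWith (G := H) disjoint_compl_right

lemma notMem_newVertices_of_mem_oldEdges {e : Sym2 (Fin (n + r))} (he : e ∈ oldEdges n r G)
    {v : Fin (n + r)} (hv : v ∈ e) : v ∉ newVertices n r := by
  obtain ⟨e, -, rfl⟩ := he
  obtain ⟨i, -, rfl⟩ := Sym2.mem_map.1 hv
  exact castAdd_notMem_newVertices i

variable [DecidableRel H.Adj]

lemma card_edgeFinset_crossGraph_le_added :
    #(crossGraph H).edgeFinset ≤ (E1 n r H \ oldEdges n r G).ncard := by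
  rw [← Set.ncard_coe_finset, coe_edgeFinset]
  refine Set.ncard_le_ncard (fun e he => ?_) (Set.toFinite _)
  induction e using Sym2.ind with
  | h v w =>
    obtain ⟨hadj, hvw⟩ := he
    have hsplit : (v ∈ newVertices n r ∧ w ∉ newVertices n r) ∨
        (v ∉ newVertices n r ∧ w ∈ newVertices n r) := by
      simpa using hvw
    refine ⟨⟨hadj, ?_⟩, fun hold => ?_⟩
    · rcases hsplit with ⟨-, hw⟩ | ⟨hv, -⟩
      · obtain ⟨i, rfl⟩ := exists_castAdd_eq_of_notMem_newVertices hw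
        exact ⟨i, Sym2.mem_mk_right _ _⟩
      · obtain ⟨i, rfl⟩ := exists_castAdd_eq_of_notMem_newVertices hv
        exact ⟨i, Sym2.mem_mk_left _ _⟩
    · rcases hsplit with ⟨hv, -⟩ | ⟨-, hw⟩
      · exact notMem_newVertices_of_mem_oldEdges hold (Sym2.mem_mk_left _ _) hv
      · exact notMem_newVertices_of_mem_oldEdges hold (Sym2.mem_mk_right _ _) hw

lemma IsExtension.degree_natAdd (hH : IsExtension n r k G H) (j : Fin r) :
    H.degree (Fin.natAdd n j) = k := by
  rw [← ncard_neighborSet_eq_degree, hH.2 j]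

lemma IsExtension.mul_le_card_edgeFinset_crossGraph (hH : IsExtension n r k G H) (hrk : r ≤ k) :
    r * (k - r + 1) ≤ #(crossGraph H).edgeFinset := by
  rw [← isBipartiteWith_sum_degrees_eq_card_edges crossGraph_isBipartiteWith]
  calc r * (k - r + 1) = ∑ _w ∈ newVertices n r, (k - r + 1) := by simp [card_newVertices]
    _ ≤ _ := sum_le_sum fun w hw => ?_
  obtain ⟨j, -, rfl⟩ := mem_map.1 hw
  rw [Fin.natAddEmb_apply] at hw ⊢
  have : H.degree _ < (crossGraph H).degree _ + _ := H.degree_lt_between_add hw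
  rw [hH.degree_natAdd j, card_newVertices] at this
  omega

variable [DecidableRel G.Adj]

lemma IsExtension.degree_castAdd (hH : IsExtension n r k G H) (i : Fin n) :
    H.degree (Fin.castAdd r i) = G.degree i := by
  rw [← ncard_neighborSet_eq_degree, hH.1 i, ncard_neighborSet_eq_degree]

lemma card_edgeFinset_sdiff_comap_le_removed :
    #(G \ H.comap (Fin.castAddEmb r)).edgeFinset ≤ (oldEdges n r G \ E1 n r H).ncard := by
  rw [← Set.ncard_coe_finset, coe_edgeFinset,
    ← Set.ncard_image_of_injective _ (Sym2.map.injective (Fin.castAdd_injective n r))]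
  refine Set.ncard_le_ncard (fun e he => ?_) (Set.toFinite _)
  obtain ⟨e, he, rfl⟩ := he
  induction e using Sym2.ind with
  | h a b =>
    obtain ⟨hG, hH⟩ := he
    exact ⟨⟨s(a, b), hG, rfl⟩, fun h => hH h.1⟩

lemma IsExtension.degree_crossGraph_le (hH : IsExtension n r k G H) (i : Fin n) :
    (crossGraph H).degree (Fin.castAdd r i) ≤ (G \ H.comap (Fin.castAddEmb r)).degree i := by
  have hsplit : (crossGraph H).degree _ + _ ≤ _ :=
    H.degree_between_add_degree_comap_le (Fin.castAddEmb r) castAdd_notMem_newVertices i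
  have hG := G.degree_le_degree_add_degree_sdiff (H.comap (Fin.castAddEmb r)) i
  rw [Fin.castAddEmb_apply, hH.degree_castAdd i] at hsplit
  omega

lemma IsExtension.card_edgeFinset_crossGraph_le_two_mul (hH : IsExtension n r k G H) :
    #(crossGraph H).edgeFinset ≤ 2 * #(G \ H.comap (Fin.castAddEmb r)).edgeFinset := by
  calc #(crossGraph H).edgeFinset = ∑ i, (crossGraph H).degree (Fin.castAdd r i) := by
        rw [← isBipartiteWith_sum_degrees_eq_card_edges' crossGraph_isBipartiteWith,
          compl_newVertices, sum_map]
        rfl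
    _ ≤ ∑ i, (G \ H.comap (Fin.castAddEmb r)).degree i :=
      sum_le_sum fun i _ => hH.degree_crossGraph_le i
    _ = 2 * #(G \ H.comap (Fin.castAddEmb r)).edgeFinset := by
      convert (G \ H.comap (Fin.castAddEmb r)).sum_degrees_eq_twice_card_edges

end Extension

lemma IsExtension.three_mul_le_two_mul_editCost {n r k : ℕ} {G : SimpleGraph (Fin n)}
    {H : SimpleGraph (Fin (n + r))} (hH : IsExtension n r k G H) (hrk : r ≤ k) :
    3 * (r * (k - r + 1)) ≤ 2 * editCost n r G H := by
  classical
  have hnew := hH.mul_le_card_edgeFinset_crossGraph hrk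
  have hadd := card_edgeFinset_crossGraph_le_added (G := G) (H := H)
  have hdel := hH.card_edgeFinset_crossGraph_le_two_mul.trans
    (Nat.mul_le_mul_left 2 card_edgeFinset_sdiff_comap_le_removed)
  unfold editCost
  omega

theorem edit_number_lower_bound_general (n r k : ℕ) (G : SimpleGraph (Fin n)) (hrk : r ≤ k) :
    ((3 * (r * (k - r + 1)) / 2 : ℕ) : ℕ∞) ≤ editNumber n r k G := by
  refine le_sInf ?_
  rintro _ ⟨H, hH, rfl⟩
  dsimp only
  exact_mod_cast Nat.div_le_of_le_mul (hH.three_mul_le_two_mul_editCost hrk)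

theorem edit_number_lower_bound (n r k : ℕ) (G : SimpleGraph (Fin n))
    (hr : 1 ≤ r) (hk : 1 ≤ k) (hrk : r ≤ k) (heven : Even (r * k)) :
    ((3 * (r * (k - r + 1)) / 2 : ℕ) : ℕ∞) ≤ editNumber n r k G :=
  edit_number_lower_bound_general n r k G hrk
end

section
/- If a graph G on {1,...,n} contains an (r,t)-subgraph with t = (1/2)·r·(k-r+1), where k ≥ r and r·k is even, then G admits an (r,k)-extension H with |E(G) \ E_1(H)| = t and |E_1(H) \ E(G)| = 2t, so N_{r,k}(G) ≤ 3t. -/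
open SimpleGraph

def IsRTSubgraph {V : Type*} (G : SimpleGraph V) (r t : ℕ) (S : Set (Sym2 V)) : Prop :=
  S ⊆ G.edgeSet ∧ S.ncard = t ∧ ∀ v : V, {e | e ∈ S ∧ v ∈ e}.ncard ≤ r

/-!
Delete the edges of the `(r, t)`-subgraph `T` from `G` and join `r` new vertices into a clique.
An old vertex `v` is then short of `d_T(v) ≤ r` edges and a new vertex of `k - r + 1`, and both
deficits sum to `2t = r (k - r + 1)`. They are met by a bipartite graph between old and new
vertices: lay out the `d_T(v)` half-edges of each `v` as consecutive integers of `[0, 2t)` and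
attach the `m`-th one to the new vertex `m % r`. A run of at most `r` consecutive integers has
distinct residues, and each residue occurs `k - r + 1` times in `[0, 2t)`. The edit deletes the
`t` edges of `T` and adds the `2t` bipartite edges.
-/

open Finset

section Blocks

variable {V : Type*} [LinearOrder V] [LocallyFiniteOrderBot V] (d : V → ℕ)

def blockStart (v : V) : ℕ := ∑ w ∈ Iio v, d w

def block (v : V) : Finset ℕ := Ico (blockStart d v) (blockStart d v + d v)

lemma blockStart_add_self (v : V) : blockStart d v + d v = ∑ w ∈ Iic v, d w := by
  rw [← Iio_insert, sum_insert (by simp), add_comm, blockStart]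

lemma blockStart_add_le_of_lt {v w : V} (h : v < w) :
    blockStart d v + d v ≤ blockStart d w := by
  rw [blockStart_add_self]
  exact sum_le_sum_of_subset fun u hu => mem_Iio.mpr ((mem_Iic.mp hu).trans_lt h)

lemma disjoint_block_of_lt {v w : V} (h : v < w) : Disjoint (block d v) (block d w) :=
  (Ico_disjoint_Ico_consecutive _ _ _).mono_right
    (Ico_subset_Ico_left (blockStart_add_le_of_lt d h))

lemma pairwiseDisjoint_block : (Set.univ : Set V).PairwiseDisjoint (block d) :=
  fun _ _ _ _ hvw =>
    hvw.lt_or_gt.elim (disjoint_block_of_lt d) fun h => (disjoint_block_of_lt d h).symm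

lemma biUnion_block [Fintype V] : univ.biUnion (block d) = range (∑ v, d v) := by
  refine eq_of_subset_of_card_le (fun m hm => ?_) ?_
  · obtain ⟨v, -, hv⟩ := mem_biUnion.mp hm
    have : blockStart d v + d v ≤ ∑ w, d w := by
      rw [blockStart_add_self]; exact sum_le_sum_of_subset (subset_univ _)
    exact mem_range.mpr ((mem_Ico.mp hv).2.trans_le this)
  · rw [card_biUnion (by simpa using pairwiseDisjoint_block d)]
    simp [block]

lemma injOn_mod_block {r : ℕ} {v : V} (hv : d v ≤ r) : Set.InjOn (· % r) (block d v) :=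
  (Nat.mod_injOn_Ico (blockStart d v) r).mono (coe_subset.mpr (Ico_subset_Ico_right (by omega)))

lemma card_filter_block_mod_le_one {r : ℕ} {v : V} (hv : d v ≤ r) (j : ℕ) :
    #{m ∈ block d v | m % r = j} ≤ 1 :=
  card_le_one.mpr fun _ ha _ hb => injOn_mod_block d hv (mem_filter.mp ha).1
    (mem_filter.mp hb).1 ((mem_filter.mp ha).2.trans (mem_filter.mp hb).2.symm)

lemma card_filter_range_mul_mod {r c j : ℕ} (hj : j < r) :
    #{m ∈ range (r * c) | m % r = j} = c := by
  have hr : 0 < r := by omega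
  have := Nat.count_modEq_card (r * c) hr j
  rw [Nat.count_eq_card_filter_range, Nat.mul_div_cancel_left _ hr, Nat.mul_mod_right,
    if_neg (Nat.not_lt_zero _), add_zero] at this
  convert this using 2
  simp [Nat.ModEq, Nat.mod_eq_of_lt hj]

def blockRel (r : ℕ) (v : V) (j : Fin r) : Prop := ∃ m ∈ block d v, m % r = j

lemma ncard_setOf_blockRel_left (r : ℕ) {v : V} (hv : d v ≤ r) :
    {j | blockRel d r v j}.ncard = d v := by
  rcases Nat.eq_zero_or_pos r with rfl | hr
  · simp [Set.eq_empty_of_isEmpty, Nat.le_zero.mp hv]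
  let f : ℕ → Fin r := fun m => ⟨m % r, Nat.mod_lt m hr⟩
  have himage : {j | blockRel d r v j} = f '' block d v := by
    ext j; simp [blockRel, f, Fin.ext_iff]
  have hinj : Set.InjOn f (block d v) := fun _ ha _ hb hab =>
    injOn_mod_block d hv ha hb (Fin.val_eq_of_eq hab)
  rw [himage, hinj.ncard_image, Set.ncard_coe_finset, block, Nat.card_Ico]
  omega

lemma ncard_setOf_blockRel_right [Fintype V] {r c : ℕ} (hd : ∀ v, d v ≤ r)
    (hsum : ∑ v, d v = r * c) (j : Fin r) :
    {v | blockRel d r v j}.ncard = c := by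
  classical
  have hblock (v : V) : #{m ∈ block d v | m % r = j} = if blockRel d r v j then 1 else 0 := by
    split_ifs with h
    · exact le_antisymm (card_filter_block_mod_le_one d (hd v) j)
        (card_pos.mpr (filter_nonempty_iff.mpr h))
    · exact card_eq_zero.mpr (filter_eq_empty_iff.mpr fun m hm hmj => h ⟨m, hm, hmj⟩)
  have hdisj : (Set.univ : Set V).PairwiseDisjoint fun v => {m ∈ block d v | m % r = j} :=
    (pairwiseDisjoint_block d).mono fun v => filter_subset _ _
  calc {v | blockRel d r v j}.ncard
      = ∑ v, if blockRel d r v j then 1 else 0 := by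
        rw [← card_filter, ← Set.ncard_coe_finset, coe_filter]; simp
    _ = #{m ∈ univ.biUnion (block d) | m % r = j} := by
        rw [filter_biUnion, card_biUnion (by simpa using hdisj)]
        exact (sum_congr rfl fun v _ => hblock v).symm
    _ = c := by rw [biUnion_block, hsum, card_filter_range_mul_mod j.isLt]

end Blocks

theorem exists_rel_ncard_eq {V : Type*} [LinearOrder V] [LocallyFiniteOrderBot V] [Fintype V]
    {d : V → ℕ} {r c : ℕ} (hd : ∀ v, d v ≤ r) (hsum : ∑ v, d v = r * c) :
    ∃ B : V → Fin r → Prop,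
      (∀ v, {j | B v j}.ncard = d v) ∧ ∀ j, {v | B v j}.ncard = c :=
  ⟨blockRel d r, fun v => ncard_setOf_blockRel_left d r (hd v),
    ncard_setOf_blockRel_right d hd hsum⟩

lemma ncard_setOf_prod_eq_sum {V W : Type*} [Fintype V] [Fintype W] (R : V → W → Prop) :
    {p : V × W | R p.1 p.2}.ncard = ∑ v, {w | R v w}.ncard := by
  classical
  simp only [Set.ncard_eq_toFinset_card', Set.toFinset_ofPred, card_filter,
    Fintype.sum_prod_type]

lemma Set.ncard_image_inl_union_image_inr {V W : Type*} [Finite V] [Finite W]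
    (s : Set V) (t : Set W) : (Sum.inl '' s ∪ Sum.inr '' t).ncard = s.ncard + t.ncard := by
  rw [Set.ncard_union_eq, Set.ncard_image_of_injective _ Sum.inl_injective,
    Set.ncard_image_of_injective _ Sum.inr_injective]
  exact Set.disjoint_left.mpr (by rintro _ ⟨a, -, rfl⟩ ⟨b, -, h⟩; cases h)

lemma Sym2.mk_mem_image_map_iff {α β : Type*} {f : α → β} {E : Set (Sym2 α)} {x y : β} :
    s(x, y) ∈ Sym2.map f '' E ↔ ∃ a b, f a = x ∧ f b = y ∧ s(a, b) ∈ E := by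
  constructor
  · rintro ⟨e, he, hxy⟩
    induction e using Sym2.ind with | _ a b => ?_
    rcases Sym2.eq_iff.mp (Sym2.map_mk f a b ▸ hxy) with ⟨rfl, rfl⟩ | ⟨rfl, rfl⟩
    exacts [⟨a, b, rfl, rfl, he⟩, ⟨b, a, rfl, rfl, Sym2.eq_swap ▸ he⟩]
  · rintro ⟨a, b, rfl, rfl, h⟩
    exact ⟨s(a, b), h, rfl⟩

namespace SimpleGraph

variable {V W : Type*}

lemma ncard_neighborSet_sdiff_add [Finite V] {G T : SimpleGraph V} (hT : T ≤ G) (v : V) :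
    ((G \ T).neighborSet v).ncard + (T.neighborSet v).ncard = (G.neighborSet v).ncard := by
  rw [neighborSet_sdiff]
  exact Set.ncard_sdiff_add_ncard_of_subset fun _ h => hT h

lemma ncard_incidenceSet (G : SimpleGraph V) (v : V) :
    (G.incidenceSet v).ncard = (G.neighborSet v).ncard := by
  classical exact Nat.card_congr (G.incidenceSetEquivNeighborSet v)

lemma sum_ncard_neighborSet [Fintype V] (G : SimpleGraph V) :
    ∑ v, (G.neighborSet v).ncard = 2 * G.edgeSet.ncard := by
  classical
  convert G.sum_degrees_eq_twice_card_edges using 3 with v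
  · rw [← card_neighborSet_eq_degree, ← Nat.card_eq_fintype_card, Nat.card_coe_set_eq]
  · rw [← Set.ncard_coe_finset, coe_edgeFinset]

lemma exists_edgeSet_eq_of_subset {G : SimpleGraph V} {S : Set (Sym2 V)} (h : S ⊆ G.edgeSet) :
    ∃ T ≤ G, T.edgeSet = S := by
  have hS : (fromEdgeSet S).edgeSet = S := by
    rw [edgeSet_fromEdgeSet, sdiff_eq_left, Set.disjoint_left]
    exact fun e he => G.not_isDiag_of_mem_edgeSet (h he)
  exact ⟨fromEdgeSet S, edgeSet_subset_edgeSet.mp (hS.trans_subset h), hS⟩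

def cliqueExtension (G : SimpleGraph V) (B : V → W → Prop) : SimpleGraph (V ⊕ W) where
  Adj
    | .inl u, .inl v => G.Adj u v
    | .inl v, .inr j => B v j
    | .inr j, .inl v => B v j
    | .inr i, .inr j => i ≠ j
  symm := ⟨by
    rintro (u | i) (v | j) h
    exacts [h.symm, h, h, Ne.symm h]⟩
  loopless := ⟨by
    rintro (u | i) h
    exacts [G.loopless.irrefl u h, h rfl]⟩

def edgesMeetingInl (X : SimpleGraph (V ⊕ W)) : Set (Sym2 (V ⊕ W)) :=
  {e ∈ X.edgeSet | ∃ v, Sum.inl v ∈ e}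

variable {G : SimpleGraph V} {B : V → W → Prop}

@[simp] lemma cliqueExtension_adj_inl_inl {u v : V} :
    (G.cliqueExtension B).Adj (.inl u) (.inl v) ↔ G.Adj u v := Iff.rfl

@[simp] lemma cliqueExtension_adj_inl_inr {v : V} {j : W} :
    (G.cliqueExtension B).Adj (.inl v) (.inr j) ↔ B v j := Iff.rfl

@[simp] lemma cliqueExtension_adj_inr_inl {v : V} {j : W} :
    (G.cliqueExtension B).Adj (.inr j) (.inl v) ↔ B v j := Iff.rfl

@[simp] lemma cliqueExtension_adj_inr_inr {i j : W} :
    (G.cliqueExtension B).Adj (.inr i) (.inr j) ↔ i ≠ j := Iff.rfl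

lemma ncard_neighborSet_cliqueExtension_inl [Finite V] [Finite W] (v : V) :
    ((G.cliqueExtension B).neighborSet (.inl v)).ncard =
      (G.neighborSet v).ncard + {j | B v j}.ncard := by
  rw [← Set.ncard_image_inl_union_image_inr]
  congr 1
  ext (u | j) <;> simp

lemma ncard_neighborSet_cliqueExtension_inr [Finite V] [Finite W] (j : W) :
    ((G.cliqueExtension B).neighborSet (.inr j)).ncard =
      {v | B v j}.ncard + (Nat.card W - 1) := by
  rw [← Set.ncard_univ, ← Set.ncard_sdiff_singleton_of_mem (Set.mem_univ j),
    ← Set.ncard_image_inl_union_image_inr]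
  congr 1
  ext (u | i) <;> simp [eq_comm]

lemma image_edgeSet_diff_edgesMeetingInl_cliqueExtension_sdiff {T : SimpleGraph V} (hT : T ≤ G) :
    Sym2.map Sum.inl '' G.edgeSet \ ((G \ T).cliqueExtension B).edgesMeetingInl =
      Sym2.map Sum.inl '' T.edgeSet := by
  ext e
  induction e using Sym2.ind with | _ x y => ?_
  rcases x with u | i <;> rcases y with v | j <;>
    simp [edgesMeetingInl, -Set.mem_image, Sym2.mk_mem_image_map_iff]
  exact ⟨fun h => h.2 h.1, fun h => ⟨hT h, fun _ => h⟩⟩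

lemma edgesMeetingInl_cliqueExtension_diff_image_edgeSet {G' : SimpleGraph V} (hG : G' ≤ G) :
    (G'.cliqueExtension B).edgesMeetingInl \ Sym2.map Sum.inl '' G.edgeSet =
      (fun p : V × W => s(.inl p.1, .inr p.2)) '' {p | B p.1 p.2} := by
  ext e
  induction e using Sym2.ind with | _ x y => ?_
  rcases x with u | i <;> rcases y with v | j <;>
    simp [edgesMeetingInl, -Set.mem_image, Sym2.mk_mem_image_map_iff]
  all_goals simp
  exact fun h => hG h

lemma injective_mk_inl_inr : (fun p : V × W => s(Sum.inl p.1, Sum.inr p.2)).Injective := by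
  rintro ⟨v, j⟩ ⟨v', j'⟩ h
  simpa [Sym2.eq_iff] using h

end SimpleGraph

section Transport

variable {n r : ℕ} (X : SimpleGraph (Fin n ⊕ Fin r))

lemma ncard_neighborSet_map_finSumFinEquiv (x : Fin n ⊕ Fin r) :
    ((X.map finSumFinEquiv.toEmbedding).neighborSet (finSumFinEquiv x)).ncard =
      (X.neighborSet x).ncard := by
  rw [← Equiv.coe_toEmbedding, neighborSet_map,
    Set.ncard_image_of_injective _ finSumFinEquiv.toEmbedding.injective]

lemma E1_map_finSumFinEquiv :
    E1 n r (X.map finSumFinEquiv.toEmbedding) =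
      Sym2.map finSumFinEquiv '' X.edgesMeetingInl := by
  ext e
  simp only [E1, edgesMeetingInl, Set.mem_ofPred_eq]
  rw [edgeSet_map]
  simp only [Function.Embedding.sym2Map_apply, Equiv.coe_toEmbedding, Set.mem_image]
  constructor
  · rintro ⟨⟨e, he, rfl⟩, i, hi⟩
    obtain ⟨x, hx, hxi⟩ := Sym2.mem_map.mp hi
    rw [← finSumFinEquiv_apply_left, finSumFinEquiv.apply_eq_iff_eq] at hxi
    exact ⟨e, ⟨he, i, hxi ▸ hx⟩, rfl⟩
  · rintro ⟨e, ⟨he, i, hi⟩, rfl⟩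
    exact ⟨⟨e, he, rfl⟩, i, Sym2.mem_map.mpr ⟨_, hi, finSumFinEquiv_apply_left i⟩⟩

lemma oldEdges_eq_image (G : SimpleGraph (Fin n)) :
    oldEdges n r G = Sym2.map finSumFinEquiv '' (Sym2.map Sum.inl '' G.edgeSet) := by
  rw [oldEdges, Set.image_image]
  congr! 2 with e
  rw [Sym2.map_map]
  congr 1

lemma ncard_oldEdges_diff_E1_map (G : SimpleGraph (Fin n)) :
    (oldEdges n r G \ E1 n r (X.map finSumFinEquiv.toEmbedding)).ncard =
      (Sym2.map Sum.inl '' G.edgeSet \ X.edgesMeetingInl).ncard := by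
  have hinj := Sym2.map.injective (finSumFinEquiv (m := n) (n := r)).injective
  rw [oldEdges_eq_image, E1_map_finSumFinEquiv, ← Set.image_sdiff hinj,
    Set.ncard_image_of_injective _ hinj]

lemma ncard_E1_map_diff_oldEdges (G : SimpleGraph (Fin n)) :
    (E1 n r (X.map finSumFinEquiv.toEmbedding) \ oldEdges n r G).ncard =
      (X.edgesMeetingInl \ Sym2.map Sum.inl '' G.edgeSet).ncard := by
  have hinj := Sym2.map.injective (finSumFinEquiv (m := n) (n := r)).injective
  rw [oldEdges_eq_image, E1_map_finSumFinEquiv, ← Set.image_sdiff hinj,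
    Set.ncard_image_of_injective _ hinj]

lemma isExtension_map_cliqueExtension_sdiff {k : ℕ} {G T : SimpleGraph (Fin n)} (hT : T ≤ G)
    {B : Fin n → Fin r → Prop} (hBv : ∀ v, {j | B v j}.ncard = (T.neighborSet v).ncard)
    (hBj : ∀ j, {v | B v j}.ncard = k - r + 1) (hrk : r ≤ k) :
    IsExtension n r k G (((G \ T).cliqueExtension B).map finSumFinEquiv.toEmbedding) := by
  refine ⟨fun i => ?_, fun j => ?_⟩
  · rw [← finSumFinEquiv_apply_left, ncard_neighborSet_map_finSumFinEquiv,
      ncard_neighborSet_cliqueExtension_inl, hBv, ncard_neighborSet_sdiff_add hT]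
  · rw [← finSumFinEquiv_apply_right, ncard_neighborSet_map_finSumFinEquiv,
      ncard_neighborSet_cliqueExtension_inr, hBj, Nat.card_fin]
    have := j.pos
    omega

end Transport

lemma editNumber_le_editCost {n r k : ℕ} {G : SimpleGraph (Fin n)} {H : SimpleGraph (Fin (n + r))}
    (h : IsExtension n r k G H) : editNumber n r k G ≤ editCost n r G H :=
  sInf_le ⟨H, h, rfl⟩

lemma even_mul_sub_add_one {r k : ℕ} (hrk : r ≤ k) (h : Even (r * k)) :
    Even (r * (k - r + 1)) := by
  rcases Nat.eq_zero_or_pos r with rfl | hr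
  · simp
  have : r * (k - r + 1) + r * (r - 1) = r * k := by rw [← mul_add]; congr 1; omega
  exact (Nat.even_add.mp (this ▸ h)).mpr (Nat.even_mul_pred_self r)

theorem subgraph_gives_extension_general (n r k : ℕ) (G : SimpleGraph (Fin n))
    (hrk : r ≤ k) (heven : Even (r * k))
    (S : Set (Sym2 (Fin n))) (hS : IsRTSubgraph G r (r * (k - r + 1) / 2) S) :
    (∃ H : SimpleGraph (Fin (n + r)), IsExtension n r k G H ∧
      (oldEdges n r G \ E1 n r H).ncard = r * (k - r + 1) / 2 ∧
      (E1 n r H \ oldEdges n r G).ncard = 2 * (r * (k - r + 1) / 2)) ∧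
    editNumber n r k G ≤ ((3 * (r * (k - r + 1) / 2) : ℕ) : ℕ∞) := by
  obtain ⟨hSG, hcard, hdeg⟩ := hS
  obtain ⟨T, hTG, rfl⟩ := exists_edgeSet_eq_of_subset hSG
  have hedges : 2 * T.edgeSet.ncard = r * (k - r + 1) := by
    rw [hcard, Nat.two_mul_div_two_of_even (even_mul_sub_add_one hrk heven)]
  obtain ⟨B, hBv, hBj⟩ := exists_rel_ncard_eq (d := fun v => (T.neighborSet v).ncard)
    (fun v => ncard_incidenceSet T v ▸ hdeg v) ((sum_ncard_neighborSet T).trans hedges)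
  set H := ((G \ T).cliqueExtension B).map finSumFinEquiv.toEmbedding
  have hH : IsExtension n r k G H := isExtension_map_cliqueExtension_sdiff hTG hBv hBj hrk
  have hdel : (oldEdges n r G \ E1 n r H).ncard = T.edgeSet.ncard := by
    rw [ncard_oldEdges_diff_E1_map, image_edgeSet_diff_edgesMeetingInl_cliqueExtension_sdiff hTG,
      Set.ncard_image_of_injective _ (Sym2.map.injective Sum.inl_injective)]
  have hadd : (E1 n r H \ oldEdges n r G).ncard = 2 * T.edgeSet.ncard := by
    rw [ncard_E1_map_diff_oldEdges, edgesMeetingInl_cliqueExtension_diff_image_edgeSet sdiff_le,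
      Set.ncard_image_of_injective _ injective_mk_inl_inr, ncard_setOf_prod_eq_sum,
      Fintype.sum_congr _ _ hBv, sum_ncard_neighborSet]
  refine ⟨⟨H, hH, hcard ▸ hdel, hcard ▸ hadd⟩, ?_⟩
  calc editNumber n r k G ≤ editCost n r G H := editNumber_le_editCost hH
    _ = _ := by rw [editCost, hdel, hadd, hcard]; push_cast; ring

theorem subgraph_gives_extension (n r k : ℕ) (G : SimpleGraph (Fin n))
    (hr : 1 ≤ r) (hk : 1 ≤ k) (hrk : r ≤ k) (heven : Even (r * k))
    (S : Set (Sym2 (Fin n))) (hS : IsRTSubgraph G r (r * (k - r + 1) / 2) S) :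
    (∃ H : SimpleGraph (Fin (n + r)), IsExtension n r k G H ∧
      (oldEdges n r G \ E1 n r H).ncard = r * (k - r + 1) / 2 ∧
      (E1 n r H \ oldEdges n r G).ncard = 2 * (r * (k - r + 1) / 2)) ∧
    editNumber n r k G ≤ ((3 * (r * (k - r + 1) / 2) : ℕ) : ℕ∞) :=
  subgraph_gives_extension_general n r k G hrk heven S hS
end
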